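/- arXiv:2309.07848 — 4 statements merged into one kernel-verified Lean document; each statement's English description precedes it below -/
import Mathlib

section
/- If ρ: G → SL₂(ℂ) is an irreducible representation and g, h ∈ G do not commute with tr(ρ([g,h])) ≠ 2, then the matrices I, ρ(g), ρ(h), ρ(gh) form a basis of the 2×2 matrix algebra M₂(ℂ) over ℂ. -/
open Matrix

/-- Cayley–Hamilton for 2×2 matrices of determinant 1. -/
lemma sq_eq_smul_sub {M : Matrix (Fin 2) (Fin 2) ℂ} (hM : M.det = 1) :
    M * M = M.trace • M - 1 := by
  rw [Matrix.det_fin_two] at hM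
  ext i j
  fin_cases i <;> fin_cases j <;>
    simp [Matrix.mul_apply, Fin.sum_univ_two, Matrix.trace_fin_two, Matrix.one_apply] <;>
    [linear_combination -hM; ring; ring; linear_combination -hM]

lemma det_fin_four_expand (M : Matrix (Fin 4) (Fin 4) ℂ) :
    M.det =
      M 0 0 * (M 1 1 * (M 2 2 * M 3 3 - M 2 3 * M 3 2)
        - M 1 2 * (M 2 1 * M 3 3 - M 2 3 * M 3 1)
        + M 1 3 * (M 2 1 * M 3 2 - M 2 2 * M 3 1))
      - M 0 1 * (M 1 0 * (M 2 2 * M 3 3 - M 2 3 * M 3 2)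
        - M 1 2 * (M 2 0 * M 3 3 - M 2 3 * M 3 0)
        + M 1 3 * (M 2 0 * M 3 2 - M 2 2 * M 3 0))
      + M 0 2 * (M 1 0 * (M 2 1 * M 3 3 - M 2 3 * M 3 1)
        - M 1 1 * (M 2 0 * M 3 3 - M 2 3 * M 3 0)
        + M 1 3 * (M 2 0 * M 3 1 - M 2 1 * M 3 0))
      - M 0 3 * (M 1 0 * (M 2 1 * M 3 2 - M 2 2 * M 3 1)
        - M 1 1 * (M 2 0 * M 3 2 - M 2 2 * M 3 0)
        + M 1 2 * (M 2 0 * M 3 1 - M 2 1 * M 3 0)) := by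
  rw [Matrix.det_succ_row_zero]
  simp [Fin.sum_univ_succ, Matrix.det_fin_three]
  have e1 : (Fin.succ 2 : Fin 4) = 3 := rfl
  have e2 : Fin.succAbove (2 : Fin 4) 2 = 3 := rfl
  have e3 : Fin.succAbove (1 : Fin 4) 2 = 3 := rfl
  have e4 : Fin.castSucc (2 : Fin 3) = (2 : Fin 4) := rfl
  have e5 : Fin.succAbove (3 : Fin 4) 2 = 2 := rfl
  simp only [e1, e2, e3, e4, e5]
  ring

/-- If ρ : G → SL₂(ℂ) is irreducible (no common eigenvector) and
g, h do not commute with tr(ρ([g,h])) ≠ 2, then I, ρ(g), ρ(h), ρ(gh) form a basis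
of M₂(ℂ) over ℂ, i.e. they are linearly independent and span. -/
theorem stmt_1 (G : Type*) [Group G]
    (ρ : G →* Matrix.SpecialLinearGroup (Fin 2) ℂ)
    (hirr : ¬ ∃ v : Fin 2 → ℂ, v ≠ 0 ∧ ∀ g : G, ∃ c : ℂ,
      ((ρ g : Matrix (Fin 2) (Fin 2) ℂ)).mulVec v = c • v)
    (g h : G) (hgh : g * h ≠ h * g)
    (htr : Matrix.trace ((ρ (g * h * g⁻¹ * h⁻¹) : Matrix (Fin 2) (Fin 2) ℂ)) ≠ 2) :
    LinearIndependent ℂ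
      ![(1 : Matrix (Fin 2) (Fin 2) ℂ),
        (ρ g : Matrix (Fin 2) (Fin 2) ℂ),
        (ρ h : Matrix (Fin 2) (Fin 2) ℂ),
        (ρ (g * h) : Matrix (Fin 2) (Fin 2) ℂ)] ∧
    Submodule.span ℂ
      {(1 : Matrix (Fin 2) (Fin 2) ℂ),
        (ρ g : Matrix (Fin 2) (Fin 2) ℂ),
        (ρ h : Matrix (Fin 2) (Fin 2) ℂ),
        (ρ (g * h) : Matrix (Fin 2) (Fin 2) ℂ)} = ⊤ := by
  set A : Matrix (Fin 2) (Fin 2) ℂ := (ρ g : Matrix (Fin 2) (Fin 2) ℂ) with hAdef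
  set B : Matrix (Fin 2) (Fin 2) ℂ := (ρ h : Matrix (Fin 2) (Fin 2) ℂ) with hBdef
  have hA : A.det = 1 := (ρ g).property
  have hB : B.det = 1 := (ρ h).property
  set x : ℂ := A.trace with hx
  set y : ℂ := B.trace with hy
  have hABm : (ρ (g * h) : Matrix (Fin 2) (Fin 2) ℂ) = A * B := by
    rw [_root_.map_mul]; rfl
  set z : ℂ := (A * B).trace with hz
  have hAB : (A * B).det = 1 := by rw [Matrix.det_mul, hA, hB, one_mul]
  have sqA := sq_eq_smul_sub hA
  have sqB := sq_eq_smul_sub hB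
  have sqAB := sq_eq_smul_sub hAB
  -- inverses
  have hAinvm : (ρ g⁻¹ : Matrix (Fin 2) (Fin 2) ℂ) = x • 1 - A := by
    have h1 : A * (x • 1 - A) = 1 := by
      rw [mul_sub, mul_smul_comm, mul_one, sqA]; abel
    have h2 : (ρ g⁻¹ : Matrix (Fin 2) (Fin 2) ℂ) * A = 1 := by
      rw [hAdef, ← Matrix.SpecialLinearGroup.coe_mul, ← _root_.map_mul, inv_mul_cancel, _root_.map_one,
        Matrix.SpecialLinearGroup.coe_one]
    calc (ρ g⁻¹ : Matrix (Fin 2) (Fin 2) ℂ)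
        = (ρ g⁻¹ : Matrix (Fin 2) (Fin 2) ℂ) * (A * (x • 1 - A)) := by rw [h1, mul_one]
      _ = ((ρ g⁻¹ : Matrix (Fin 2) (Fin 2) ℂ) * A) * (x • 1 - A) := by rw [mul_assoc]
      _ = x • 1 - A := by rw [h2, one_mul]
  have hBinvm : (ρ h⁻¹ : Matrix (Fin 2) (Fin 2) ℂ) = y • 1 - B := by
    have h1 : B * (y • 1 - B) = 1 := by
      rw [mul_sub, mul_smul_comm, mul_one, sqB]; abel
    have h2 : (ρ h⁻¹ : Matrix (Fin 2) (Fin 2) ℂ) * B = 1 := by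
      rw [hBdef, ← Matrix.SpecialLinearGroup.coe_mul, ← _root_.map_mul, inv_mul_cancel, _root_.map_one,
        Matrix.SpecialLinearGroup.coe_one]
    calc (ρ h⁻¹ : Matrix (Fin 2) (Fin 2) ℂ)
        = (ρ h⁻¹ : Matrix (Fin 2) (Fin 2) ℂ) * (B * (y • 1 - B)) := by rw [h1, mul_one]
      _ = ((ρ h⁻¹ : Matrix (Fin 2) (Fin 2) ℂ) * B) * (y • 1 - B) := by rw [mul_assoc]
      _ = y • 1 - B := by rw [h2, one_mul]
  -- trace computations
  have t1 : (1 : Matrix (Fin 2) (Fin 2) ℂ).trace = 2 := by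
    simp [Matrix.trace_one]
  have tAA : (A * A).trace = x * x - 2 := by
    rw [sqA, Matrix.trace_sub, Matrix.trace_smul, t1, smul_eq_mul]
  have tBB : (B * B).trace = y * y - 2 := by
    rw [sqB, Matrix.trace_sub, Matrix.trace_smul, t1, smul_eq_mul]
  have tABAB : (A * B * (A * B)).trace = z * z - 2 := by
    rw [sqAB, Matrix.trace_sub, Matrix.trace_smul, t1, smul_eq_mul]
  have tBA : (B * A).trace = z := by rw [Matrix.trace_mul_comm]
  have tAAB : (A * (A * B)).trace = x * z - y := by
    rw [← mul_assoc, sqA, sub_mul, smul_mul_assoc, one_mul, Matrix.trace_sub,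
      Matrix.trace_smul, smul_eq_mul, hy, hz]
  have tABA : (A * B * A).trace = x * z - y := by
    rw [Matrix.trace_mul_comm (A * B) A]; exact tAAB
  have tABB : (A * B * B).trace = y * z - x := by
    rw [mul_assoc, sqB, mul_sub, mul_smul_comm, mul_one, Matrix.trace_sub,
      Matrix.trace_smul, smul_eq_mul]
  have tBAB : (B * (A * B)).trace = y * z - x := by
    rw [Matrix.trace_mul_comm B (A * B)]; exact tABB
  -- commutator trace
  have hC : (ρ (g * h * g⁻¹ * h⁻¹) : Matrix (Fin 2) (Fin 2) ℂ)
      = A * B * ((x • 1 - A) * (y • 1 - B)) := by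
    rw [_root_.map_mul, _root_.map_mul, Matrix.SpecialLinearGroup.coe_mul,
      Matrix.SpecialLinearGroup.coe_mul, hAinvm, hBinvm, hABm, mul_assoc]
  have expand : A * B * ((x • 1 - A) * (y • 1 - B))
      = (x * y) • (A * B) - x • (A * B * B) - y • (A * B * A) + A * B * (A * B) := by
    simp only [mul_sub, sub_mul, smul_mul_assoc, mul_smul_comm, smul_smul,
      one_mul, mul_one, mul_assoc]
    module
  have trC : (ρ (g * h * g⁻¹ * h⁻¹) : Matrix (Fin 2) (Fin 2) ℂ).trace
      = x * x + y * y + z * z - x * y * z - 2 := by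
    rw [hC, expand, Matrix.trace_add, Matrix.trace_sub, Matrix.trace_sub,
      Matrix.trace_smul, Matrix.trace_smul, Matrix.trace_smul, tABAB, tABB, tABA,
      smul_eq_mul, smul_eq_mul, smul_eq_mul, hz]
    ring
  have hδ : x * x + y * y + z * z - x * y * z - 4 ≠ 0 := by
    intro hcon
    apply htr
    rw [trC]
    linear_combination hcon
  -- Gram matrix
  set Gm : Matrix (Fin 4) (Fin 4) ℂ :=
    !![2, x, y, z;
       x, x * x - 2, z, x * z - y;
       y, z, y * y - 2, y * z - x;
       z, x * z - y, y * z - x, z * z - 2] with hGm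
  have hdetG : Gm.det ≠ 0 := by
    have : Gm.det = -(x * x + y * y + z * z - x * y * z - 4) ^ 2 := by
      rw [det_fin_four_expand]
      simp [hGm]
      ring
    rw [this]
    intro hc
    exact hδ (pow_eq_zero_iff (n := 2) (by norm_num) |>.mp (neg_eq_zero.mp hc))
  set v : Fin 4 → Matrix (Fin 2) (Fin 2) ℂ :=
    ![(1 : Matrix (Fin 2) (Fin 2) ℂ), A, B, A * B] with hv
  have hli : LinearIndependent ℂ v := by
    rw [Fintype.linearIndependent_iff]
    intro c hc
    have key : ∀ j : Fin 4, ∑ i : Fin 4, c i * (v j * v i).trace = 0 := by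
      intro j
      have : (v j * ∑ i : Fin 4, c i • v i).trace = 0 := by rw [hc, mul_zero, Matrix.trace_zero]
      rw [Finset.mul_sum] at this
      simpa [mul_smul_comm, Matrix.trace_smul] using this
    have e0 := key 0
    have e1 := key 1
    have e2 := key 2
    have e3 := key 3
    simp only [hv, Fin.sum_univ_four, Matrix.cons_val_zero, Matrix.cons_val_one,
      Matrix.head_cons, Matrix.cons_val_two, Matrix.tail_cons, Matrix.cons_val_three,
      one_mul, mul_one, t1, tAA, tBB, tABAB, tBA, tAAB, tABA, tABB, tBAB] at e0 e1 e2 e3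
    simp only [← hy] at e0 e2
    simp only [← hz] at e0 e1 e3
    have hc0 : Gm.mulVec c = 0 := by
      funext j
      fin_cases j <;>
        simp [hGm, Matrix.mulVec, dotProduct, Fin.sum_univ_four] <;>
        [linear_combination e0; linear_combination e1; linear_combination e2;
         linear_combination e3]
    have := Matrix.eq_zero_of_mulVec_eq_zero hdetG hc0
    exact fun i => congrFun this i
  constructor
  · rw [hABm]; exact hli
  · rw [hABm]
    have hrange : Set.range v =
        {(1 : Matrix (Fin 2) (Fin 2) ℂ), A, B, A * B} := by
      ext m
      constructor
      · rintro ⟨i, rfl⟩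
        fin_cases i <;> simp [hv]
      · intro hm
        rcases hm with rfl | rfl | rfl | rfl
        · exact ⟨0, rfl⟩
        · exact ⟨1, rfl⟩
        · exact ⟨2, rfl⟩
        · exact ⟨3, rfl⟩
    rw [← hrange]
    apply hli.span_eq_top_of_card_eq_finrank
    simp [Module.finrank_matrix]
end

section
/- If A, B ∈ SL₂(ℂ) commute, tr(A) = −2, tr(B) = −2, and A ≠ −I, then tr(AB) = 2. -/
open Matrix

lemma trace_sq_fin_two (X : Matrix (Fin 2) (Fin 2) ℂ) :
    Matrix.trace X ^ 2 = Matrix.trace (X * X) + 2 * X.det := by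
  simp [Matrix.trace_fin_two, Matrix.det_fin_two, Matrix.mul_apply, Fin.sum_univ_two]
  ring

/-- If A, B ∈ SL₂(ℂ) commute, tr(A) = −2, tr(B) = −2, and A ≠ −I,
then tr(AB) = 2. -/
theorem stmt_5 (A B : Matrix.SpecialLinearGroup (Fin 2) ℂ)
    (hcomm : A * B = B * A)
    (hA : Matrix.trace ((A : Matrix (Fin 2) (Fin 2) ℂ)) = -2)
    (hB : Matrix.trace ((B : Matrix (Fin 2) (Fin 2) ℂ)) = -2)
    (hAne : (A : Matrix (Fin 2) (Fin 2) ℂ) ≠ -1) :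
    Matrix.trace ((A * B : Matrix.SpecialLinearGroup (Fin 2) ℂ) :
      Matrix (Fin 2) (Fin 2) ℂ) = 2 := by
  set X : Matrix (Fin 2) (Fin 2) ℂ := (A : Matrix (Fin 2) (Fin 2) ℂ) with hX
  set Y : Matrix (Fin 2) (Fin 2) ℂ := (B : Matrix (Fin 2) (Fin 2) ℂ) with hY
  have hdA : X.det = 1 := A.2
  have hdB : Y.det = 1 := B.2
  have hC : X * Y = Y * X := by
    have := congrArg (fun (M : Matrix.SpecialLinearGroup (Fin 2) ℂ) =>
      (M : Matrix (Fin 2) (Fin 2) ℂ)) hcomm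
    simpa using this
  have ha : X 0 0 + X 1 1 = -2 := by simpa [Matrix.trace_fin_two] using hA
  have hb : Y 0 0 + Y 1 1 = -2 := by simpa [Matrix.trace_fin_two] using hB
  have hda : X 0 0 * X 1 1 - X 0 1 * X 1 0 = 1 := by
    simpa [Matrix.det_fin_two] using hdA
  have hdb : Y 0 0 * Y 1 1 - Y 0 1 * Y 1 0 = 1 := by
    simpa [Matrix.det_fin_two] using hdB
  set N : Matrix (Fin 2) (Fin 2) ℂ := X + 1 with hN
  set M : Matrix (Fin 2) (Fin 2) ℂ := Y + 1 with hM
  have hNM : N * M = M * N := by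
    simp only [hN, hM, mul_add, add_mul, one_mul, mul_one, hC]
    abel
  have hN2 : N * N = 0 := by
    ext i j
    fin_cases i <;> fin_cases j <;>
      simp [hN, Matrix.mul_apply, Fin.sum_univ_two, Matrix.add_apply,
        Matrix.one_apply, Matrix.zero_apply]
    · linear_combination (X 0 0) * ha - hda
    · linear_combination (X 0 1) * ha
    · linear_combination (X 1 0) * ha
    · linear_combination (X 1 1) * ha - hda
  have hM2 : M * M = 0 := by
    ext i j
    fin_cases i <;> fin_cases j <;>
      simp [hM, Matrix.mul_apply, Fin.sum_univ_two, Matrix.add_apply,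
        Matrix.one_apply, Matrix.zero_apply]
    · linear_combination (Y 0 0) * hb - hdb
    · linear_combination (Y 0 1) * hb
    · linear_combination (Y 1 0) * hb
    · linear_combination (Y 1 1) * hb - hdb
  have hdN : N.det = 0 := by
    simp only [hN]
    rw [Matrix.det_fin_two]
    simp [Matrix.add_apply, Matrix.one_apply]
    linear_combination ha + hda
  have hsq : (N * M) * (N * M) = 0 := by
    have e1 : (N * M) * (N * M) = N * (M * N) * M := by noncomm_ring
    rw [e1, ← hNM]
    have e2 : N * (N * M) * M = (N * N) * (M * M) := by noncomm_ring
    rw [e2, hN2, zero_mul]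
  have hdNM : (N * M).det = 0 := by rw [Matrix.det_mul, hdN, zero_mul]
  have htr0 : Matrix.trace (N * M) = 0 := by
    have h2 : Matrix.trace (N * M) ^ 2 = 0 := by
      rw [trace_sq_fin_two, hsq, hdNM]
      simp
    exact pow_eq_zero_iff (by norm_num) |>.mp h2
  have hexp : N * M = X * Y + X + Y + 1 := by
    simp only [hN, hM, mul_add, add_mul, one_mul, mul_one]
    abel
  have htrNM : Matrix.trace (N * M) = Matrix.trace (X * Y) - 2 := by
    rw [hexp]
    simp [Matrix.trace_add, hA, hB, Matrix.trace_one]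
    ring
  have hgoal : Matrix.trace (X * Y) = 2 := by
    have h := htrNM.symm.trans htr0
    linear_combination h
  calc Matrix.trace ((A * B : Matrix.SpecialLinearGroup (Fin 2) ℂ) :
        Matrix (Fin 2) (Fin 2) ℂ) = Matrix.trace (X * Y) := by
        rw [Matrix.SpecialLinearGroup.coe_mul]
    _ = 2 := hgoal
end

section
/- Let F₂ be the free group on two generators a, b. The map χ ↦ (χ(a), χ(b), χ(ab)) defines a bijection between SL₂(ℂ)-characters of F₂ and points of ℂ³; in particular the SL₂(ℂ)-character variety of F₂ is isomorphic to affine space ℂ³. -/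
open Matrix

/-- A function χ : G → ℂ is an SL₂(ℂ)-character if it is the trace function of
some representation ρ : G → SL₂(ℂ). -/
def IsSL2Character {G : Type*} [Group G] (χ : G → ℂ) : Prop :=
  ∃ ρ : G →* Matrix.SpecialLinearGroup (Fin 2) ℂ,
    ∀ g : G, χ g = Matrix.trace ((ρ g : Matrix (Fin 2) (Fin 2) ℂ))

abbrev M2 := Matrix (Fin 2) (Fin 2) ℂ

noncomputable def Lc (A B : M2) (c0 c1 c2 c3 : ℂ) : M2 :=
  c0 • 1 + c1 • A + c2 • B + c3 • (A * B)

lemma Lc_trace (A B : M2) (c0 c1 c2 c3 : ℂ) :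
    trace (Lc A B c0 c1 c2 c3) =
      2*c0 + trace A * c1 + trace B * c2 + trace (A*B) * c3 := by
  simp [Lc, trace_fin_two, Matrix.mul_apply, Fin.sum_univ_two, Matrix.one_apply]
  ring

lemma Lc_mul' (a b c d e f g h : ℂ) (hA : a*d - b*c = 1) (hB : e*h - f*g = 1)
    (p0 p1 p2 p3 q0 q1 q2 q3 : ℂ) :
    letI A : M2 := !![a,b;c,d]
    letI B : M2 := !![e,f;g,h]
    Lc A B p0 p1 p2 p3 * Lc A B q0 q1 q2 q3 =
    Lc A B
      (p0*q0 - p1*q1 - p2*q2 - p3*q3 - trace B*p3*q1 - trace A*p2*q3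
        - (trace A*trace B - trace (A*B))*p2*q1)
      (p0*q1 + p1*q0 + p2*q3 - p3*q2 + trace B*p2*q1 + trace A*p1*q1 + trace (A*B)*p3*q1)
      (p0*q2 + p2*q0 - p1*q3 + p3*q1 + trace B*p2*q2 + trace A*p2*q1 + trace (A*B)*p2*q3)
      (p0*q3 + p3*q0 + p1*q2 - p2*q1 + trace B*p3*q2 + trace A*p1*q3 + trace (A*B)*p3*q3) := by
  ext i j
  fin_cases i <;> fin_cases j <;>
    simp [Lc, Matrix.mul_apply, Fin.sum_univ_two, Matrix.trace_fin_two, Matrix.one_apply]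
  · linear_combination
      ((-1)*p1*q1 + (-1)*h*p3*q1 + f*g*p3*q3 + (-1)*e*p1*q3 + (-1)*e*h*p3*q3) * hA
      + ((-1)*p3*q3 + (-1)*p2*q2 + (-1)*d*p2*q3 + (-1)*a*p3*q2) * hB
  · linear_combination
      (f*p3*q1 + (-1)*f*p1*q3) * hA + ((-1)*b*p3*q2 + b*p2*q3) * hB
  · linear_combination
      (g*p3*q1 + (-1)*g*p1*q3) * hA + ((-1)*c*p3*q2 + c*p2*q3) * hB
  · linear_combination
      ((-1)*p1*q1 + (-1)*h*p1*q3 + f*g*p3*q3 + (-1)*e*p3*q1 + (-1)*e*h*p3*q3) * hA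
      + ((-1)*p3*q3 + (-1)*p2*q2 + (-1)*d*p3*q2 + (-1)*a*p2*q3) * hB

lemma Lc_mul (A B : M2) (hA : A.det = 1) (hB : B.det = 1) (p0 p1 p2 p3 q0 q1 q2 q3 : ℂ) :
    Lc A B p0 p1 p2 p3 * Lc A B q0 q1 q2 q3 =
    Lc A B
      (p0*q0 - p1*q1 - p2*q2 - p3*q3 - trace B*p3*q1 - trace A*p2*q3
        - (trace A*trace B - trace (A*B))*p2*q1)
      (p0*q1 + p1*q0 + p2*q3 - p3*q2 + trace B*p2*q1 + trace A*p1*q1 + trace (A*B)*p3*q1)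
      (p0*q2 + p2*q0 - p1*q3 + p3*q1 + trace B*p2*q2 + trace A*p2*q1 + trace (A*B)*p2*q3)
      (p0*q3 + p3*q0 + p1*q2 - p2*q1 + trace B*p3*q2 + trace A*p1*q3 + trace (A*B)*p3*q3) := by
  rw [Matrix.det_fin_two] at hA hB
  rw [Matrix.eta_fin_two A, Matrix.eta_fin_two B]
  exact Lc_mul' _ _ _ _ _ _ _ _ hA hB p0 p1 p2 p3 q0 q1 q2 q3

lemma Lc_inv (A B : M2) (c0 c1 c2 c3 : ℂ) :
    trace (Lc A B c0 c1 c2 c3) • (1 : M2) - Lc A B c0 c1 c2 c3 =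
    Lc A B (c0 + trace A * c1 + trace B * c2 + trace (A*B) * c3) (-c1) (-c2) (-c3) := by
  ext i j
  fin_cases i <;> fin_cases j <;>
    simp [Lc, Matrix.mul_apply, Fin.sum_univ_two, Matrix.trace_fin_two, Matrix.one_apply] <;>
    ring

lemma sl2_coe_inv (g : SpecialLinearGroup (Fin 2) ℂ) :
    ((g⁻¹ : SpecialLinearGroup (Fin 2) ℂ) : M2) = trace (g : M2) • (1 : M2) - (g : M2) := by
  rw [show ((g⁻¹ : SpecialLinearGroup (Fin 2) ℂ) : M2) = adjugate (g : M2) from rfl,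
    Matrix.adjugate_fin_two]
  ext i j
  fin_cases i <;> fin_cases j <;>
    simp [Matrix.trace_fin_two, Matrix.one_apply]

lemma sl2_coe_mul (g h : SpecialLinearGroup (Fin 2) ℂ) :
    ((g * h : SpecialLinearGroup (Fin 2) ℂ) : M2) = (g : M2) * (h : M2) := rfl

lemma char_eq (ρ σ : FreeGroup (Fin 2) →* SpecialLinearGroup (Fin 2) ℂ)
    (h1 : trace ((σ (FreeGroup.of 0) : M2)) = trace ((ρ (FreeGroup.of 0) : M2)))
    (h2 : trace ((σ (FreeGroup.of 1) : M2)) = trace ((ρ (FreeGroup.of 1) : M2)))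
    (h3 : trace ((σ (FreeGroup.of 0) : M2) * (σ (FreeGroup.of 1) : M2)) =
          trace ((ρ (FreeGroup.of 0) : M2) * (ρ (FreeGroup.of 1) : M2)))
    (w : FreeGroup (Fin 2)) :
    trace ((ρ w : M2)) = trace ((σ w : M2)) := by
  have dA : ((ρ (FreeGroup.of 0) : M2)).det = 1 := (ρ (FreeGroup.of 0)).prop
  have dB : ((ρ (FreeGroup.of 1) : M2)).det = 1 := (ρ (FreeGroup.of 1)).prop
  have dA' : ((σ (FreeGroup.of 0) : M2)).det = 1 := (σ (FreeGroup.of 0)).prop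
  have dB' : ((σ (FreeGroup.of 1) : M2)).det = 1 := (σ (FreeGroup.of 1)).prop
  have key : ∀ u : FreeGroup (Fin 2), ∃ c0 c1 c2 c3 : ℂ,
      ((ρ u : M2)) = Lc (ρ (FreeGroup.of 0) : M2) (ρ (FreeGroup.of 1) : M2) c0 c1 c2 c3 ∧
      ((σ u : M2)) = Lc (σ (FreeGroup.of 0) : M2) (σ (FreeGroup.of 1) : M2) c0 c1 c2 c3 := by
    intro u
    refine FreeGroup.induction_on u ?_ ?_ ?_ ?_
    · exact ⟨1, 0, 0, 0, by simp [Lc], by simp [Lc]⟩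
    · intro i
      fin_cases i
      · exact ⟨0, 1, 0, 0,
          by show ((ρ (FreeGroup.of 0)) : M2) = _; simp [Lc],
          by show ((σ (FreeGroup.of 0)) : M2) = _; simp [Lc]⟩
      · exact ⟨0, 0, 1, 0,
          by show ((ρ (FreeGroup.of 1)) : M2) = _; simp [Lc],
          by show ((σ (FreeGroup.of 1)) : M2) = _; simp [Lc]⟩
    · rintro i ⟨c0, c1, c2, c3, hc, hc'⟩
      refine ⟨c0 + trace ((ρ (FreeGroup.of 0) : M2)) * c1
          + trace ((ρ (FreeGroup.of 1) : M2)) * c2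
          + trace ((ρ (FreeGroup.of 0) : M2) * (ρ (FreeGroup.of 1) : M2)) * c3,
          -c1, -c2, -c3, ?_, ?_⟩
      · rw [_root_.map_inv, sl2_coe_inv, hc, Lc_inv]
      · rw [_root_.map_inv, sl2_coe_inv, hc', Lc_inv, h1, h2, h3]
    · rintro u v ⟨c0, c1, c2, c3, hc, hc'⟩ ⟨d0, d1, d2, d3, hd, hd'⟩
      set x := trace ((ρ (FreeGroup.of 0) : M2)) with hx
      set y := trace ((ρ (FreeGroup.of 1) : M2)) with hy
      set z := trace ((ρ (FreeGroup.of 0) : M2) * (ρ (FreeGroup.of 1) : M2)) with hz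
      refine ⟨c0*d0 - c1*d1 - c2*d2 - c3*d3 - y*c3*d1 - x*c2*d3 - (x*y - z)*c2*d1,
        c0*d1 + c1*d0 + c2*d3 - c3*d2 + y*c2*d1 + x*c1*d1 + z*c3*d1,
        c0*d2 + c2*d0 - c1*d3 + c3*d1 + y*c2*d2 + x*c2*d1 + z*c2*d3,
        c0*d3 + c3*d0 + c1*d2 - c2*d1 + y*c3*d2 + x*c1*d3 + z*c3*d3, ?_, ?_⟩
      · rw [_root_.map_mul, sl2_coe_mul, hc, hd]
        exact Lc_mul _ _ dA dB c0 c1 c2 c3 d0 d1 d2 d3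
      · rw [_root_.map_mul, sl2_coe_mul, hc', hd',
          Lc_mul _ _ dA' dB' c0 c1 c2 c3 d0 d1 d2 d3, h1, h2, h3]
  obtain ⟨c0, c1, c2, c3, hc, hc'⟩ := key w
  rw [hc, hc', Lc_trace, Lc_trace, h1, h2, h3]

/-- For the free group F₂ = ⟨a, b⟩, the map χ ↦ (χ(a), χ(b), χ(ab))
is a bijection from the set of SL₂(ℂ)-characters of F₂ onto ℂ³. -/
theorem stmt_7 :
    Function.Bijective
      (fun χ : {χ : FreeGroup (Fin 2) → ℂ // IsSL2Character χ} =>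
        ((χ.1 (FreeGroup.of 0), χ.1 (FreeGroup.of 1),
          χ.1 (FreeGroup.of 0 * FreeGroup.of 1)) : ℂ × ℂ × ℂ)) := by
  constructor
  · rintro ⟨χ₁, ρ₁, e₁⟩ ⟨χ₂, ρ₂, e₂⟩ h
    simp only [Prod.mk.injEq] at h
    obtain ⟨t1, t2, t3⟩ := h
    rw [e₁, e₂] at t1 t2 t3
    rw [_root_.map_mul, _root_.map_mul, sl2_coe_mul,
      sl2_coe_mul] at t3
    apply Subtype.ext
    funext w
    show χ₁ w = χ₂ w
    rw [e₁ w, e₂ w]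
    exact char_eq ρ₁ ρ₂ t1.symm t2.symm t3.symm w
  · rintro ⟨t1, t2, t3⟩
    obtain ⟨s, hs⟩ := IsAlgClosed.exists_pow_nat_eq (k := ℂ) (t3^2 - 4) two_pos
    have hdA : (!![t1, -1; 1, 0] : M2).det = 1 := by
      rw [Matrix.det_fin_two_of]; ring
    have hdB : (!![0, (t3+s)/2; -((t3-s)/2), t2] : M2).det = 1 := by
      rw [Matrix.det_fin_two_of]
      field_simp
      linear_combination -hs
    set ρ := FreeGroup.lift
      ((![⟨_, hdA⟩, ⟨_, hdB⟩] : Fin 2 → SpecialLinearGroup (Fin 2) ℂ)) with hρ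
    have r0 : ρ (FreeGroup.of 0) = ⟨_, hdA⟩ := FreeGroup.lift_apply_of
    have r1 : ρ (FreeGroup.of 1) = ⟨_, hdB⟩ := FreeGroup.lift_apply_of
    refine ⟨⟨fun g => trace ((ρ g : M2)), ρ, fun g => rfl⟩, ?_⟩
    show (trace ((ρ (FreeGroup.of 0) : M2)), trace ((ρ (FreeGroup.of 1) : M2)),
        trace ((ρ (FreeGroup.of 0 * FreeGroup.of 1) : M2))) = (t1, t2, t3)
    rw [_root_.map_mul, sl2_coe_mul, r0, r1]
    simp only [Prod.mk.injEq]
    refine ⟨?_, ?_, ?_⟩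
    · show trace (!![t1, -1; 1, 0] : M2) = t1
      rw [Matrix.trace_fin_two_of]; ring
    · show trace (!![0, (t3+s)/2; -((t3-s)/2), t2] : M2) = t2
      rw [Matrix.trace_fin_two_of]; ring
    · show trace ((!![t1, -1; 1, 0] : M2) * !![0, (t3+s)/2; -((t3-s)/2), t2]) = t3
      rw [Matrix.mul_fin_two, Matrix.trace_fin_two_of]; ring
end

section
/- Let R be a discrete valuation ring with fraction field K and residue field k, let ρ: G → SL₂(K) be a representation whose image lies in SL₂(R), and let ρ̄: G → SL₂(k) be its reduction modulo the maximal ideal. If there exist g, h ∈ G such that {I, ρ̄(g), ρ̄(h), ρ̄(gh)} is linearly independent over k (equivalently ρ̄ restricted to ⟨g,h⟩ spans M₂(k)), then the R-span of {I, ρ(g), ρ(h), ρ(gh)} inside M₂(K) is a free R-module of rank 4 whose reduction modulo the maximal ideal is the central simple algebra M₂(k). -/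
open Matrix


-- helper: in a valuation ring, a finite family has an element dividing all others
lemma exists_dvd_all {R : Type*} [CommRing R] [IsDomain R] [ValuationRing R]
    {n : ℕ} (c : Fin (n+1) → R) : ∃ j, ∀ i, c j ∣ c i := by
  induction n with
  | zero => exact ⟨0, fun i => by fin_cases i; rfl⟩
  | succ n ih =>
    obtain ⟨j, hj⟩ := ih (fun i => c i.succ)
    rcases ValuationRing.dvd_total (c 0) (c j.succ) with H | H
    · refine ⟨0, fun i => ?_⟩
      rcases Fin.eq_zero_or_eq_succ i with rfl | ⟨i', rfl⟩
      · rfl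
      · exact H.trans (hj i')
    · refine ⟨j.succ, fun i => ?_⟩
      rcases Fin.eq_zero_or_eq_succ i with rfl | ⟨i', rfl⟩
      · exact H
      · exact hj i'

-- lifting linear independence from residue field to R, for matrix families over a DVR
lemma li_lift {R : Type*} [CommRing R] [IsDomain R] [IsDiscreteValuationRing R]
    {n : ℕ} (w : Fin (n+1) → Matrix (Fin 2) (Fin 2) R)
    (hindep : LinearIndependent (R ⧸ IsLocalRing.maximalIdeal R)
      (fun i => (w i).map (Ideal.Quotient.mk (IsLocalRing.maximalIdeal R)))) :
    LinearIndependent R w := by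
  rw [Fintype.linearIndependent_iff] at hindep ⊢
  intro c hc
  by_contra hne
  push_neg at hne
  obtain ⟨j0, hj0⟩ := hne
  obtain ⟨j, hj⟩ := exists_dvd_all c
  have hcj : c j ≠ 0 := fun hz => hj0 (by simpa [hz] using hj j0)
  choose d hd using hj
  have key : ∑ i, d i • w i = 0 := by
    have : c j • (∑ i, d i • w i) = c j • (0 : Matrix (Fin 2) (Fin 2) R) := by
      rw [Finset.smul_sum, smul_zero, ← hc]
      refine Finset.sum_congr rfl fun i _ => ?_
      rw [smul_smul, ← hd i]
    exact smul_right_injective _ hcj this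
  have hred : ∀ i, Ideal.Quotient.mk (IsLocalRing.maximalIdeal R) (d i) = 0 := by
    apply hindep
    have h2 := congrArg (fun M : Matrix (Fin 2) (Fin 2) R =>
      M.map (Ideal.Quotient.mk (IsLocalRing.maximalIdeal R))) key
    have h3 : (∑ i, d i • w i).map (Ideal.Quotient.mk (IsLocalRing.maximalIdeal R)) =
        ∑ i, (Ideal.Quotient.mk (IsLocalRing.maximalIdeal R)) (d i) •
          (w i).map (Ideal.Quotient.mk (IsLocalRing.maximalIdeal R)) := by
      ext a b
      simp [Matrix.map_apply, Matrix.sum_apply, Matrix.smul_apply, smul_eq_mul]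
    rw [← h3]
    simpa [Matrix.map_apply] using h2
  have hdj : d j = 1 := by
    have h4 : c j * d j = c j * 1 := by rw [mul_one, ← hd j]
    exact mul_left_cancel₀ hcj h4
  have := hred j
  rw [hdj] at this
  simp at this

lemma range4 {α : Type*} (a b c d : α) : Set.range ![a,b,c,d] = {a,b,c,d} := by
  rw [Matrix.range_cons, Matrix.range_cons, Matrix.range_cons, Matrix.range_cons_empty,
    Set.singleton_union, Set.singleton_union, Set.singleton_union]

lemma helper3 {k : Type*} [Field k] (u : Fin 4 → Matrix (Fin 2) (Fin 2) k)
    (h : LinearIndependent k u) : Submodule.span k (Set.range u) = ⊤ := by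
  apply h.span_eq_top_of_card_eq_finrank
  rw [Module.finrank_matrix, Module.finrank_self]
  simp


set_option maxHeartbeats 1000000 in

/-- Let R be a DVR with fraction field K and residue field k, let
ρ : G → SL₂(K) have image in SL₂(R) (witnessed by ρR with ρ = ρR followed by the
entrywise map R → K), and let ρ̄ be the entrywise reduction of ρR modulo the maximal
ideal.  If I, ρ̄(g), ρ̄(h), ρ̄(gh) are linearly independent over k, then the R-span of
{I, ρ(g), ρ(h), ρ(gh)} in M₂(K) is a free R-module of rank 4, and the reduction mod
the maximal ideal spans all of the central simple algebra M₂(k). -/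
theorem stmt_19 (G : Type*) [Group G]
    (R : Type*) [CommRing R] [IsDomain R] [IsDiscreteValuationRing R]
    (K : Type*) [Field K] [Algebra R K] [IsFractionRing R K]
    (ρ : G →* Matrix.SpecialLinearGroup (Fin 2) K)
    (ρR : G →* Matrix.SpecialLinearGroup (Fin 2) R)
    (hcompat : ∀ x : G, (ρ x : Matrix (Fin 2) (Fin 2) K) =
      ((ρR x : Matrix (Fin 2) (Fin 2) R)).map (algebraMap R K))
    (g h : G)
    (hindep : LinearIndependent (R ⧸ IsLocalRing.maximalIdeal R)
      ![(1 : Matrix (Fin 2) (Fin 2) (R ⧸ IsLocalRing.maximalIdeal R)),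
        ((ρR g : Matrix (Fin 2) (Fin 2) R)).map (Ideal.Quotient.mk (IsLocalRing.maximalIdeal R)),
        ((ρR h : Matrix (Fin 2) (Fin 2) R)).map (Ideal.Quotient.mk (IsLocalRing.maximalIdeal R)),
        ((ρR (g * h) : Matrix (Fin 2) (Fin 2) R)).map
          (Ideal.Quotient.mk (IsLocalRing.maximalIdeal R))]) :
    Module.Free R
      (Submodule.span R
        {(1 : Matrix (Fin 2) (Fin 2) K),
          (ρ g : Matrix (Fin 2) (Fin 2) K),
          (ρ h : Matrix (Fin 2) (Fin 2) K),
          (ρ (g * h) : Matrix (Fin 2) (Fin 2) K)}) ∧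
    Module.finrank R
      (Submodule.span R
        {(1 : Matrix (Fin 2) (Fin 2) K),
          (ρ g : Matrix (Fin 2) (Fin 2) K),
          (ρ h : Matrix (Fin 2) (Fin 2) K),
          (ρ (g * h) : Matrix (Fin 2) (Fin 2) K)}) = 4 ∧
    Submodule.span (R ⧸ IsLocalRing.maximalIdeal R)
      {(1 : Matrix (Fin 2) (Fin 2) (R ⧸ IsLocalRing.maximalIdeal R)),
        ((ρR g : Matrix (Fin 2) (Fin 2) R)).map (Ideal.Quotient.mk (IsLocalRing.maximalIdeal R)),
        ((ρR h : Matrix (Fin 2) (Fin 2) R)).map (Ideal.Quotient.mk (IsLocalRing.maximalIdeal R)),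
        ((ρR (g * h) : Matrix (Fin 2) (Fin 2) R)).map
          (Ideal.Quotient.mk (IsLocalRing.maximalIdeal R))} = ⊤ := by
  set mk := Ideal.Quotient.mk (IsLocalRing.maximalIdeal R) with hmk
  have hw : LinearIndependent R
      ![(1 : Matrix (Fin 2) (Fin 2) R), (ρR g : Matrix (Fin 2) (Fin 2) R),
        (ρR h : Matrix (Fin 2) (Fin 2) R), (ρR (g * h) : Matrix (Fin 2) (Fin 2) R)] := by
    apply li_lift
    have e : (fun i => ((![(1 : Matrix (Fin 2) (Fin 2) R), (ρR g : Matrix (Fin 2) (Fin 2) R),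
        (ρR h : Matrix (Fin 2) (Fin 2) R), (ρR (g * h) : Matrix (Fin 2) (Fin 2) R)]) i).map mk) =
        ![(1 : Matrix (Fin 2) (Fin 2) (R ⧸ IsLocalRing.maximalIdeal R)),
          ((ρR g : Matrix (Fin 2) (Fin 2) R)).map mk,
          ((ρR h : Matrix (Fin 2) (Fin 2) R)).map mk,
          ((ρR (g * h) : Matrix (Fin 2) (Fin 2) R)).map mk] := by
      funext i
      fin_cases i
      · exact Matrix.map_one _ (map_zero _) (map_one _)
      · rfl
      · rfl
      · rfl
    rw [e]
    exact hindep
  let L : Matrix (Fin 2) (Fin 2) R →ₗ[R] Matrix (Fin 2) (Fin 2) K :=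
    (AlgHom.mapMatrix (Algebra.ofId R K)).toLinearMap
  have hv : LinearIndependent R
      ![(1 : Matrix (Fin 2) (Fin 2) K), (ρ g : Matrix (Fin 2) (Fin 2) K),
        (ρ h : Matrix (Fin 2) (Fin 2) K), (ρ (g * h) : Matrix (Fin 2) (Fin 2) K)] := by
    have hLw := hw.map' L
      (LinearMap.ker_eq_bot.mpr (Matrix.map_injective (IsFractionRing.injective R K)))
    have e : (L ∘ ![(1 : Matrix (Fin 2) (Fin 2) R), (ρR g : Matrix (Fin 2) (Fin 2) R),
        (ρR h : Matrix (Fin 2) (Fin 2) R), (ρR (g * h) : Matrix (Fin 2) (Fin 2) R)]) =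
        ![(1 : Matrix (Fin 2) (Fin 2) K), (ρ g : Matrix (Fin 2) (Fin 2) K),
          (ρ h : Matrix (Fin 2) (Fin 2) K), (ρ (g * h) : Matrix (Fin 2) (Fin 2) K)] := by
      funext i
      fin_cases i
      · exact Matrix.map_one _ (by simp) (by simp)
      · exact (hcompat g).symm
      · exact (hcompat h).symm
      · exact (hcompat (g * h)).symm
    rwa [e] at hLw
  have hsetK : ({(1 : Matrix (Fin 2) (Fin 2) K),
      (ρ g : Matrix (Fin 2) (Fin 2) K), (ρ h : Matrix (Fin 2) (Fin 2) K),
      (ρ (g * h) : Matrix (Fin 2) (Fin 2) K)} : Set (Matrix (Fin 2) (Fin 2) K)) =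
      Set.range ![(1 : Matrix (Fin 2) (Fin 2) K), (ρ g : Matrix (Fin 2) (Fin 2) K),
        (ρ h : Matrix (Fin 2) (Fin 2) K), (ρ (g * h) : Matrix (Fin 2) (Fin 2) K)] :=
    (range4 _ _ _ _).symm
  refine ⟨?_, ?_, ?_⟩
  · rw [hsetK]
    exact Module.Free.of_basis (Module.Basis.span hv)
  · rw [hsetK]
    rw [Module.finrank_eq_card_basis (Module.Basis.span hv)]
    rfl
  · letI : Field (R ⧸ IsLocalRing.maximalIdeal R) := Ideal.Quotient.field _
    rw [← range4]
    exact helper3 _ hindep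
end
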